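/- Let λ ∈ ℂ with |λ| = 1, λ not a root of unity and λ² ≠ 1; let φ be normalized and symmetric; let q* ∈ ℂ[[t]] with q*(t) = 1 + q₂*t² + ... and s₀ = (1+2q₂*)/4 ≠ 0. Define ψ, h, w as in the construction, Δφ = (w + w∘I)/2, R₃ = [z·∂_z(S_{q*}(φ⁻,φ))]/z − ∇⁺( h·Π(ψ/h) ), and R₄ = ∂_z(ℰ(q*,φ))·(w/φ_z) + R₃/φ_z. Then ℰ(q*,φ) + ∂_φℰ(q*,φ)(Δφ) = (1/2)·( R₄ + R₄∘I ). -/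

import Mathlib

/- Common setup: formal power series in two commuting variables `z, z̄` over `ℂ`,
represented by their coefficient functions, together with the operators of
Treschev's linearizable billiard construction. -/

open scoped BigOperators

noncomputable section

namespace Treschev

/-- A formal power series `f = Σ_{j,k≥0} f_{j,k} z^j z̄^k`, given by its coefficients. -/
abbrev FPS : Type := ℕ → ℕ → ℂ

/-- A formal power series in one variable `t`, given by its coefficients. -/
abbrev OPS : Type := ℕ → ℂ

/-- Product of two formal power series (Cauchy product). -/
def fmul (f g : FPS) : FPS := fun j k =>
  ∑ a ∈ Finset.range (j + 1), ∑ b ∈ Finset.range (k + 1), f a b * g (j - a) (k - b)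

/-- The constant series `1`. -/
def oneF : FPS := fun j k => if j = 0 ∧ k = 0 then 1 else 0

/-- Powers of a formal power series. -/
def fpow (f : FPS) : ℕ → FPS
  | 0 => oneF
  | n + 1 => fmul f (fpow f n)

/-- Substitution of a two-variable series `u` with zero constant term into a
one-variable series `q` (the formula is the correct one whenever `u 0 0 = 0`). -/
def substOne (q : OPS) (u : FPS) : FPS := fun j k =>
  ∑ m ∈ Finset.range (j + k + 1), q m * fpow u m j k

/-- Substitution `F(u, v)` of two series with zero constant term into a two-variable
series `F` (the formula is the correct one whenever `u 0 0 = 0` and `v 0 0 = 0`). -/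
def subst2 (F : FPS) (u v : FPS) : FPS := fun j k =>
  ∑ m ∈ Finset.range (j + k + 1), ∑ n ∈ Finset.range (j + k + 1),
    F m n * fmul (fpow u m) (fpow v n) j k

/-- The Taylor series of `cos`. -/
def cosSeries : OPS := fun n => if n % 2 = 0 then (-1 : ℂ) ^ (n / 2) / (n.factorial : ℂ) else 0

/-- `(t₁ + t₂)/2` as a two-variable series. -/
def halfSum : FPS := fun j k =>
  if j = 1 ∧ k = 0 then (1 / 2 : ℂ) else if j = 0 ∧ k = 1 then (1 / 2 : ℂ) else 0

/-- `(t₁ − t₂)/2` as a two-variable series. -/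
def halfDiff : FPS := fun j k =>
  if j = 1 ∧ k = 0 then (1 / 2 : ℂ) else if j = 0 ∧ k = 1 then (-(1 / 2) : ℂ) else 0

/-- The generating function `S_q(t₁,t₂) = q((t₁+t₂)/2)·cos((t₁−t₂)/2)` as a
formal power series in `t₁, t₂`. -/
def Sq (q : OPS) : FPS := fmul (substOne q halfSum) (substOne cosSeries halfDiff)

/-- Formal partial derivative with respect to the first variable. -/
def d1 (f : FPS) : FPS := fun j k => ((j + 1 : ℕ) : ℂ) * f (j + 1) k

/-- Formal partial derivative with respect to the second variable. -/
def d2 (f : FPS) : FPS := fun j k => ((k + 1 : ℕ) : ℂ) * f j (k + 1)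

/-- `f⁺`, with `(f⁺)_{j,k} = λ^{j−k} f_{j,k}`. -/
def plus (l : ℂ) (f : FPS) : FPS := fun j k => l ^ ((j : ℤ) - (k : ℤ)) * f j k

/-- `f⁻`, with `(f⁻)_{j,k} = λ^{k−j} f_{j,k}`. -/
def minus (l : ℂ) (f : FPS) : FPS := fun j k => l ^ ((k : ℤ) - (j : ℤ)) * f j k

/-- `∇f = f⁻ − λ⁻¹ f`. -/
def nab (l : ℂ) (f : FPS) : FPS := minus l f - l⁻¹ • f

/-- `∇⁺f = f − λ f⁺`. -/
def nabPlus (l : ℂ) (f : FPS) : FPS := f - l • plus l f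

/-- The average `[f] = Σ_j f_{j,j} (z z̄)^j`. -/
def avg (f : FPS) : FPS := fun j k => if j = k then f j k else 0

/-- The projection `Π₊(f) = [z f]/z`. -/
def Pip (f : FPS) : FPS := fun j k => if k = j + 1 then f j k else 0

/-- The projection `Π(f) = [z̄ f]/z̄`. -/
def Pim (f : FPS) : FPS := fun j k => if j = k + 1 then f j k else 0

/-- `E⁺`, the partial inverse of `∇⁺`. -/
def Eplus (l : ℂ) (f : FPS) : FPS := fun j k =>
  if k = j + 1 then 0 else f j k / (1 - l ^ ((j : ℤ) - (k : ℤ) + 1))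

/-- `E`, the partial inverse of `∇`. -/
def Emin (l : ℂ) (f : FPS) : FPS := fun j k =>
  if j = k + 1 then 0 else f j k / (l ^ ((k : ℤ) - (j : ℤ)) - l⁻¹)

/-- `Ẽ`, with `Ẽ(f − f⁺) = f − [f]`. -/
def Etilde (l : ℂ) (f : FPS) : FPS := fun j k =>
  if j = k then 0 else f j k / (1 - l ^ ((j : ℤ) - (k : ℤ)))

/-- `f ∘ I`, where `I(z,z̄) = (z̄,z)`. -/
def swapI (f : FPS) : FPS := fun j k => f k j

/-- Multiplication by `z`. -/
def mulz (f : FPS) : FPS := fun j k => if j = 0 then 0 else f (j - 1) k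

/-- Multiplication by `z̄`. -/
def mulzbar (f : FPS) : FPS := fun j k => if k = 0 then 0 else f j (k - 1)

/-- Division by `z` (valid on series divisible by `z`). -/
def divz (f : FPS) : FPS := fun j k => f (j + 1) k

/-- Multiplicative inverse `1/h` (the geometric-series formula, which is the correct
inverse whenever `h 0 0 ≠ 0`). -/
def finv (h : FPS) : FPS := fun j k =>
  (h 0 0)⁻¹ * ∑ m ∈ Finset.range (j + k + 1),
    fpow (fun a b => if a = 0 ∧ b = 0 then 0 else -(h a b) * (h 0 0)⁻¹) m j k

/-- Quotient `f/h` of formal power series. -/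
def fdiv (f h : FPS) : FPS := fmul f (finv h)

/-- `ℰ(q,φ) = ∂₂S_q(φ⁻,φ) + ∂₁S_q(φ,φ⁺)`. -/
def Err (l : ℂ) (q : OPS) (φ : FPS) : FPS :=
  subst2 (d2 (Sq q)) (minus l φ) φ + subst2 (d1 (Sq q)) φ (plus l φ)

/-- `∂_φℰ(q,φ)(w) = ∂₁₂S_q(φ⁻,φ)w⁻ + ∂₂₂S_q(φ⁻,φ)w + ∂₁₁S_q(φ,φ⁺)w + ∂₁₂S_q(φ,φ⁺)w⁺`. -/
def dErr (l : ℂ) (q : OPS) (φ : FPS) (w : FPS) : FPS :=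
  fmul (subst2 (d1 (d2 (Sq q))) (minus l φ) φ) (minus l w)
    + fmul (subst2 (d2 (d2 (Sq q))) (minus l φ) φ) w
    + fmul (subst2 (d1 (d1 (Sq q))) φ (plus l φ)) w
    + fmul (subst2 (d1 (d2 (Sq q))) φ (plus l φ)) (plus l w)

/-- `h = ∂₁₂S_q(φ⁻,φ)·φ_z·φ_z⁻`. -/
def hFun (l : ℂ) (q : OPS) (φ : FPS) : FPS :=
  fmul (fmul (subst2 (d1 (d2 (Sq q))) (minus l φ) φ) (d1 φ)) (minus l (d1 φ))

/-- `ψ = −E⁺( ℰ(q,φ)·φ_z − Π₊(ℰ(q,φ)·φ_z) )`. -/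
def psiFun (l : ℂ) (q : OPS) (φ : FPS) : FPS :=
  -Eplus l (fmul (Err l q φ) (d1 φ) - Pip (fmul (Err l q φ) (d1 φ)))

/-- `w = φ_z·E( ψ/h − Π(ψ/h) )`. -/
def wFun (l : ℂ) (q : OPS) (φ : FPS) : FPS :=
  fmul (d1 φ)
    (Emin l (fdiv (psiFun l q φ) (hFun l q φ) - Pim (fdiv (psiFun l q φ) (hFun l q φ))))

/-- `κ = ∂₁₂S_q(φ⁻,φ)·(λ⁻¹ φ_z⁻ φ_z̄ − λ φ_z̄⁻ φ_z)`. -/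
def kappaFun (l : ℂ) (q : OPS) (φ : FPS) : FPS :=
  fmul (subst2 (d1 (d2 (Sq q))) (minus l φ) φ)
    (l⁻¹ • fmul (minus l (d1 φ)) (d2 φ) - l • fmul (minus l (d2 φ)) (d1 φ))

/-- `g = φ_z̄ / φ_z`. -/
def gFun (φ : FPS) : FPS := fdiv (d2 φ) (d1 φ)

/-- `R₁ = ( −[z̄·ℰ·φ_z̄] + [z̄·g·[z·ℰ·φ_z]/z] ) / ( λ·z·[κ] )`. -/
def R1Fun (l : ℂ) (q : OPS) (φ : FPS) : FPS :=
  l⁻¹ • fmul (finv (avg (kappaFun l q φ)))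
    (divz (-avg (mulzbar (fmul (Err l q φ) (d2 φ)))
      + avg (mulzbar (fmul (gFun φ) (divz (avg (mulz (fmul (Err l q φ) (d1 φ)))))))))

/-- `R₂ = (1/z)·[ z̄·ψ·(λ⁻¹g − λg⁻)·([κ]−κ)/(κ·[κ]) ]`. -/
def R2Fun (l : ℂ) (q : OPS) (φ : FPS) : FPS :=
  divz (avg (mulzbar
    (fmul (fmul (psiFun l q φ) (l⁻¹ • gFun φ - l • minus l (gFun φ)))
      (fmul (avg (kappaFun l q φ) - kappaFun l q φ)
        (finv (fmul (kappaFun l q φ) (avg (kappaFun l q φ))))))))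

/-- `R₃ = [z·∂_z(S_q(φ⁻,φ))]/z − ∇⁺( h·Π(ψ/h) )`. -/
def R3Fun (l : ℂ) (q : OPS) (φ : FPS) : FPS :=
  Pip (d1 (subst2 (Sq q) (minus l φ) φ))
    - nabPlus l (fmul (hFun l q φ) (Pim (fdiv (psiFun l q φ) (hFun l q φ))))

/-- `R₄ = ∂_z(ℰ(q,φ))·(w/φ_z) + R₃/φ_z`. -/
def R4Fun (l : ℂ) (q : OPS) (φ : FPS) : FPS :=
  fmul (d1 (Err l q φ)) (fdiv (wFun l q φ) (d1 φ)) + fdiv (R3Fun l q φ) (d1 φ)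

/-- `φ = z + z̄ + O₃`. -/
def normalized (φ : FPS) : Prop :=
  φ 0 0 = 0 ∧ φ 1 0 = 1 ∧ φ 0 1 = 1 ∧ φ 2 0 = 0 ∧ φ 1 1 = 0 ∧ φ 0 2 = 0

/-- The weighted norm `‖f‖_ρ = Σ_{j,k} |f_{j,k}| ρ^{j+k} ∈ [0,∞]`. -/
def wnorm (ρ : ℝ) (f : FPS) : ENNReal :=
  ∑' p : ℕ × ℕ, ENNReal.ofReal (‖f p.1 p.2‖ * ρ ^ (p.1 + p.2))

/-- `D(f) = Σ_{n≥1} n f_n (z z̄)^n` for a series in `z z̄`. -/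
def Dop (f : FPS) : FPS := fun j k => if j = k then (j : ℂ) * f j k else 0

/-- `D̄(f − f₀) = Σ_{n≥1} (f_n/n) (z z̄)^n` for a series in `z z̄`. -/
def Dbar (f : FPS) : FPS := fun j k => if j = k ∧ j ≠ 0 then f j k / (j : ℂ) else 0

/-- The constant part `f₀` of a series. -/
def constPart (f : FPS) : FPS := fun j k => if j = 0 ∧ k = 0 then f 0 0 else 0

/-- `ξ₀ = ((λ⁻¹+1)z + (λ+1)z̄)/2`. -/
def xi0 (l : ℂ) : FPS := fun a b =>
  if a = 1 ∧ b = 0 then (l⁻¹ + 1) / 2 else if a = 0 ∧ b = 1 then (l + 1) / 2 else 0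

/- Writing `w = φ_z ξ`, the chain rule for `ℰ` and the twist rules `(fg)⁺ = f⁺g⁺`,
`S(u,v)⁺ = S(u⁺,v⁺)` give the identity `φ_z · ∂_φℰ(φ_z ξ) = ∇⁺(h ∇ξ) + φ_z ξ ∂_zℰ`. With it,
`ℰ + ∂_φℰ(w) = R₄` becomes the pair of homological equations `∇⁺ψ = −(ℰφ_z − Π₊(ℰφ_z))` and
`∇ξ = ψ/h − Π(ψ/h)`, which `E⁺` and `E` solve because `λ` is not a root of unity; the leftover
projections are exactly `R₃`. For symmetric `φ`, `ℰ` is `I`-invariant and `∂_φℰ` commutes with `I`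
(as `S_q` is symmetric), so the average of this identity and its image under `I` is the claim. -/

open Finset in
theorem _root_.Derivation.apply_sum_sum_mul_pow_mul_pow {R A : Type*} [CommSemiring R]
    [CommRing A] [Algebra R A] (D : Derivation R A A) {c : ℕ → ℕ → A}
    (hc : ∀ m n, D (c m n) = 0) (a b : A) (M N : ℕ) :
    D (∑ m ∈ range (M + 1), ∑ n ∈ range (N + 1), c m n * a ^ m * b ^ n) =
      (∑ m ∈ range M, ∑ n ∈ range (N + 1), (m + 1) * c (m + 1) n * a ^ m * b ^ n) * D a +
      (∑ m ∈ range (M + 1), ∑ n ∈ range N, (n + 1) * c m (n + 1) * a ^ m * b ^ n) * D b := by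
  have hterm : ∀ m n, D (c m n * a ^ m * b ^ n) =
      m * c m n * a ^ (m - 1) * b ^ n * D a + n * c m n * a ^ m * b ^ (n - 1) * D b := by
    intro m n
    simp only [Derivation.leibniz, Derivation.leibniz_pow, hc, smul_eq_mul, nsmul_eq_mul]
    ring
  simp only [map_sum, hterm, sum_add_distrib, ← sum_mul]
  congr 2
  · rw [sum_range_succ']
    simp
  · refine sum_congr rfl fun m _ => ?_
    rw [sum_range_succ']
    simp

/-- `f` as a series in `z` with coefficients in `ℂ⟦z̄⟧`; identities between products and
derivatives of series are checked there. -/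
def toPowerSeries : FPS ≃+ PowerSeries (PowerSeries ℂ) where
  toFun f := PowerSeries.mk fun j => PowerSeries.mk (f j)
  invFun F j k := PowerSeries.coeff k (PowerSeries.coeff j F)
  left_inv f := by ext; simp
  right_inv F := by ext; simp
  map_add' f g := by ext; simp

@[simp]
lemma coeff_coeff_toPowerSeries (f : FPS) (j k : ℕ) :
    PowerSeries.coeff k (PowerSeries.coeff j (toPowerSeries f)) = f j k := by
  simp [toPowerSeries]

lemma toPowerSeries_smul (c : ℂ) (f : FPS) :
    toPowerSeries (c • f) = PowerSeries.C (PowerSeries.C c) * toPowerSeries f := by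
  ext j k
  rw [PowerSeries.coeff_C_mul, PowerSeries.coeff_C_mul]
  simp

lemma toPowerSeries_oneF : toPowerSeries oneF = 1 := by
  ext j k
  rw [coeff_coeff_toPowerSeries, PowerSeries.coeff_one]
  split_ifs with hj <;> simp [oneF, PowerSeries.coeff_one, hj]

lemma toPowerSeries_fmul (f g : FPS) :
    toPowerSeries (fmul f g) = toPowerSeries f * toPowerSeries g := by
  ext j k
  simp only [PowerSeries.coeff_mul, map_sum, coeff_coeff_toPowerSeries, fmul,
    Finset.Nat.sum_antidiagonal_eq_sum_range_succ_mk]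

lemma toPowerSeries_fpow (f : FPS) (m : ℕ) :
    toPowerSeries (fpow f m) = toPowerSeries f ^ m := by
  induction m with
  | zero => exact toPowerSeries_oneF
  | succ n ih => rw [fpow, toPowerSeries_fmul, ih, pow_succ']

lemma toPowerSeries_d1 (f : FPS) :
    toPowerSeries (d1 f) = PowerSeries.derivative _ (toPowerSeries f) := by
  ext j k
  rw [PowerSeries.coeff_derivative, ← map_natCast PowerSeries.C, ← map_one PowerSeries.C,
    ← map_add, mul_comm, PowerSeries.coeff_C_mul]
  simp [d1]

lemma fmul_comm (f g : FPS) : fmul f g = fmul g f :=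
  toPowerSeries.injective <| by simp only [toPowerSeries_fmul, mul_comm]

lemma fmul_assoc (f g h : FPS) : fmul (fmul f g) h = fmul f (fmul g h) :=
  toPowerSeries.injective <| by simp only [toPowerSeries_fmul, mul_assoc]

lemma one_fmul (f : FPS) : fmul oneF f = f :=
  toPowerSeries.injective <| by simp only [toPowerSeries_fmul, toPowerSeries_oneF, one_mul]

lemma fmul_add (f g h : FPS) : fmul f (g + h) = fmul f g + fmul f h :=
  toPowerSeries.injective <| by simp only [toPowerSeries_fmul, map_add, mul_add]

lemma add_fmul (f g h : FPS) : fmul (f + g) h = fmul f h + fmul g h :=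
  toPowerSeries.injective <| by simp only [toPowerSeries_fmul, map_add, add_mul]

lemma fmul_sub (f g h : FPS) : fmul f (g - h) = fmul f g - fmul f h :=
  toPowerSeries.injective <| by simp only [toPowerSeries_fmul, map_sub, mul_sub]

lemma fmul_smul (c : ℂ) (f g : FPS) : fmul f (c • g) = c • fmul f g :=
  toPowerSeries.injective <| by
    simp only [toPowerSeries_fmul, toPowerSeries_smul, mul_left_comm]

/-- The paper's `f = O_N`. -/
def IsO (N : ℕ) (f : FPS) : Prop := ∀ j k, j + k < N → f j k = 0

lemma isO_one_iff {f : FPS} : IsO 1 f ↔ f 0 0 = 0 :=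
  ⟨fun h => h 0 0 one_pos, fun h j k hjk => by
    obtain ⟨rfl, rfl⟩ : j = 0 ∧ k = 0 := by omega
    exact h⟩

lemma IsO.fmul {p q : ℕ} {f g : FPS} (hf : IsO p f) (hg : IsO q g) : IsO (p + q) (fmul f g) := by
  intro j k hjk
  refine Finset.sum_eq_zero fun a ha => Finset.sum_eq_zero fun b hb => ?_
  rw [Finset.mem_range] at ha hb
  rcases lt_or_ge (a + b) p with hab | hab
  · rw [hf a b hab, zero_mul]
  · rw [hg (j - a) (k - b) (by omega), mul_zero]

lemma IsO.fpow {u : FPS} (hu : IsO 1 u) (m : ℕ) : IsO m (fpow u m) := by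
  induction m with
  | zero => intro j k h; omega
  | succ n ih =>
    have h := hu.fmul ih
    rw [Nat.add_comm] at h
    exact h

lemma fmul_apply_congr_left {f f' : FPS} (g : FPS) {j k : ℕ}
    (h : ∀ a ≤ j, ∀ b ≤ k, f a b = f' a b) : fmul f g j k = fmul f' g j k :=
  Finset.sum_congr rfl fun a ha => Finset.sum_congr rfl fun b hb => by
    rw [h a (Finset.mem_range_succ_iff.mp ha) b (Finset.mem_range_succ_iff.mp hb)]

lemma fmul_apply_congr_right (f : FPS) {g g' : FPS} {j k : ℕ}
    (h : ∀ a ≤ j, ∀ b ≤ k, g a b = g' a b) : fmul f g j k = fmul f g' j k := by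
  rw [fmul_comm, fmul_apply_congr_left f h, fmul_comm]

def truncSubst2 (G u v : FPS) (M N : ℕ) : FPS :=
  ∑ m ∈ Finset.range M, ∑ n ∈ Finset.range N, G m n • fmul (fpow u m) (fpow v n)

lemma subst2_apply_eq_truncSubst2 {u v : FPS} (hu : IsO 1 u) (hv : IsO 1 v) (G : FPS)
    {j k M N : ℕ} (hM : j + k < M) (hN : j + k < N) :
    subst2 G u v j k = truncSubst2 G u v M N j k := by
  set t : ℕ → ℕ → ℂ := fun m n => G m n * fmul (fpow u m) (fpow v n) j k
  have ht : ∀ m n, j + k < m + n → t m n = 0 := fun m n h => by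
    simp only [t, (hu.fpow m).fmul (hv.fpow n) j k h, mul_zero]
  calc subst2 G u v j k
      = ∑ m ∈ Finset.range (j + k + 1), ∑ n ∈ Finset.range (j + k + 1), t m n := rfl
    _ = ∑ m ∈ Finset.range M, ∑ n ∈ Finset.range (j + k + 1), t m n := by
      refine Finset.sum_subset (Finset.range_subset_range.2 hM) fun m _ hm => ?_
      rw [Finset.mem_range, not_lt] at hm
      exact Finset.sum_eq_zero fun n _ => ht m n (by omega)
    _ = ∑ m ∈ Finset.range M, ∑ n ∈ Finset.range N, t m n := by
      refine Finset.sum_congr rfl fun m _ => ?_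
      refine Finset.sum_subset (Finset.range_subset_range.2 hN) fun n _ hn => ?_
      rw [Finset.mem_range, not_lt] at hn
      exact ht m n (by omega)
    _ = truncSubst2 G u v M N j k := by simp [truncSubst2, t]

lemma toPowerSeries_truncSubst2 (G u v : FPS) (M N : ℕ) :
    toPowerSeries (truncSubst2 G u v M N) =
      ∑ m ∈ Finset.range M, ∑ n ∈ Finset.range N, PowerSeries.C (PowerSeries.C (G m n)) *
        toPowerSeries u ^ m * toPowerSeries v ^ n := by
  simp only [truncSubst2, map_sum, toPowerSeries_smul, toPowerSeries_fmul, toPowerSeries_fpow,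
    mul_assoc]

lemma d1_truncSubst2 (G u v : FPS) (M N : ℕ) :
    d1 (truncSubst2 G u v (M + 1) (N + 1)) =
      fmul (truncSubst2 (d1 G) u v M (N + 1)) (d1 u) +
        fmul (truncSubst2 (d2 G) u v (M + 1) N) (d1 v) := by
  apply toPowerSeries.injective
  rw [toPowerSeries_d1, toPowerSeries_truncSubst2]
  -- `PowerSeries.derivative` carries `MvPowerSeries.instAlgebra`, which is not the instance
  -- synthesized for `ℂ⟦X⟧⟦X⟧` (`PowerSeries.algebraPowerSeries`), so it is passed by hand
  refine (@Derivation.apply_sum_sum_mul_pow_mul_pow _ _ _ _ MvPowerSeries.instAlgebra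
    (PowerSeries.derivative (PowerSeries ℂ)) (fun m n => PowerSeries.C (PowerSeries.C (G m n)))
    (fun _ _ => PowerSeries.derivative_C) _ _ _ _).trans ?_
  rw [map_add, toPowerSeries_fmul, toPowerSeries_fmul, toPowerSeries_truncSubst2,
    toPowerSeries_truncSubst2, toPowerSeries_d1, toPowerSeries_d1]
  simp [d1, d2]

lemma d1_subst2 {u v : FPS} (hu : IsO 1 u) (hv : IsO 1 v) (G : FPS) :
    d1 (subst2 G u v) = fmul (subst2 (d1 G) u v) (d1 u) + fmul (subst2 (d2 G) u v) (d1 v) := by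
  funext j k
  set K := j + k + 1
  have htrunc : ∀ G' M N, j + k < M → j + k < N → ∀ a ≤ j, ∀ b ≤ k,
      subst2 G' u v a b = truncSubst2 G' u v M N a b := fun G' M N hM hN a ha b hb =>
    subst2_apply_eq_truncSubst2 hu hv G' (by omega) (by omega)
  calc d1 (subst2 G u v) j k = d1 (truncSubst2 G u v (K + 1) (K + 1)) j k := by
        simp only [d1]
        rw [subst2_apply_eq_truncSubst2 hu hv G (M := K + 1) (N := K + 1) (by omega) (by omega)]
    _ = _ := by
        simp only [d1_truncSubst2, Pi.add_apply]
        rw [fmul_apply_congr_left _ (htrunc (d1 G) K (K + 1) (by omega) (by omega)),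
          fmul_apply_congr_left _ (htrunc (d2 G) (K + 1) K (by omega) (by omega))]

lemma fmul_finv {h : FPS} (h0 : h 0 0 ≠ 0) : fmul h (finv h) = oneF := by
  set c := h 0 0 with hc
  set u : FPS := fun a b => if a = 0 ∧ b = 0 then 0 else -(h a b) * c⁻¹
  have hu : IsO 1 u := isO_one_iff.2 (if_pos ⟨rfl, rfl⟩)
  have h_eq : h = c • (oneF - u) := by
    funext a b
    by_cases hab : a = 0 ∧ b = 0
    · simp [hab.1, hab.2, u, oneF, hc]
    · simp only [u, oneF, hab, if_false, Pi.smul_apply, Pi.sub_apply, smul_eq_mul, neg_mul,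
        sub_neg_eq_add, zero_add]
      field_simp
  funext j k
  set N := j + k + 1
  have hfinv : ∀ a ≤ j, ∀ b ≤ k,
      finv h a b = (c⁻¹ • ∑ m ∈ Finset.range N, fpow u m) a b := by
    intro a ha b hb
    simp only [finv, Pi.smul_apply, Finset.sum_apply, smul_eq_mul]
    congr 1
    refine Finset.sum_subset (Finset.range_subset_range.2 (by omega)) fun m _ hm => ?_
    rw [Finset.mem_range, not_lt] at hm
    exact hu.fpow m a b (by omega)
  -- `(1 - u) Σ_{m < N} u^m = 1 - u^N`, and `u^N` has no terms of degree `j + k < N`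
  have hgeom : fmul h (c⁻¹ • ∑ m ∈ Finset.range N, fpow u m) = oneF - fpow u N := by
    apply toPowerSeries.injective
    have hC : PowerSeries.C (PowerSeries.C c) * PowerSeries.C (PowerSeries.C c⁻¹) = 1 := by
      rw [← map_mul, ← map_mul, mul_inv_cancel₀ h0, map_one, map_one]
    rw [h_eq]
    simp only [toPowerSeries_fmul, toPowerSeries_smul, map_sub, map_sum, toPowerSeries_oneF,
      toPowerSeries_fpow]
    linear_combination (1 - toPowerSeries u) * (∑ m ∈ Finset.range N, toPowerSeries u ^ m) * hC
      + mul_neg_geom_sum (toPowerSeries u) N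
  have huN : fpow u N j k = 0 := hu.fpow N j k (by omega)
  rw [fmul_apply_congr_right h hfinv, hgeom]
  simp [huN]

lemma fmul_fdiv {h : FPS} (h0 : h 0 0 ≠ 0) (f : FPS) : fmul h (fdiv f h) = f := by
  rw [fdiv, fmul_comm f, ← fmul_assoc, fmul_finv h0, one_fmul]

lemma fmul_left_cancel {h : FPS} (h0 : h 0 0 ≠ 0) {f g : FPS}
    (hfg : fmul h f = fmul h g) : f = g := by
  have hinv : ∀ x, fmul (finv h) (fmul h x) = x := fun x => by
    rw [← fmul_assoc, fmul_comm (finv h), fmul_finv h0, one_fmul]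
  rw [← hinv f, hfg, hinv]

section Twist

variable {l : ℂ}

lemma minus_eq_plus_inv (l : ℂ) (f : FPS) : minus l f = plus l⁻¹ f := by
  funext j k
  simp only [minus, plus, inv_zpow', neg_sub]

lemma plus_plus (a b : ℂ) (f : FPS) : plus a (plus b f) = plus (a * b) f := by
  funext j k
  simp only [plus, mul_zpow]
  ring

lemma plus_one (f : FPS) : plus 1 f = f := by
  funext j k
  simp [plus]

lemma plus_add (f g : FPS) : plus l (f + g) = plus l f + plus l g := by
  funext j k
  simp only [plus, Pi.add_apply, mul_add]

lemma plus_sub (f g : FPS) : plus l (f - g) = plus l f - plus l g := by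
  funext j k
  simp only [plus, Pi.sub_apply, mul_sub]

lemma plus_smul (c : ℂ) (f : FPS) : plus l (c • f) = c • plus l f := by
  funext j k
  simp only [plus, Pi.smul_apply, smul_eq_mul, mul_left_comm]

lemma IsO.plus {N : ℕ} {f : FPS} (hf : IsO N f) (l : ℂ) : IsO N (plus l f) :=
  fun j k h => show l ^ _ * f j k = 0 by rw [hf j k h, mul_zero]

lemma IsO.minus {N : ℕ} {f : FPS} (hf : IsO N f) (l : ℂ) : IsO N (minus l f) :=
  minus_eq_plus_inv l f ▸ hf.plus l⁻¹

lemma plus_fmul (hl0 : l ≠ 0) (f g : FPS) : plus l (fmul f g) = fmul (plus l f) (plus l g) := by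
  funext j k
  simp only [plus, fmul, Finset.mul_sum]
  refine Finset.sum_congr rfl fun a ha => Finset.sum_congr rfl fun b hb => ?_
  rw [Finset.mem_range, Nat.lt_succ_iff] at ha hb
  have : (j : ℤ) - k = ((a : ℤ) - b) + (((j - a : ℕ) : ℤ) - ((k - b : ℕ) : ℤ)) := by
    push_cast [Nat.cast_sub ha, Nat.cast_sub hb]
    ring
  rw [this, zpow_add₀ hl0]
  ring

lemma plus_oneF (l : ℂ) : plus l oneF = oneF := by
  funext j k
  by_cases h : j = 0 ∧ k = 0 <;> simp [plus, oneF, h]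

lemma plus_fpow (hl0 : l ≠ 0) (u : FPS) (m : ℕ) : plus l (fpow u m) = fpow (plus l u) m := by
  induction m with
  | zero => exact plus_oneF l
  | succ n ih => rw [fpow, fpow, plus_fmul hl0, ih]

lemma plus_subst2 (hl0 : l ≠ 0) (F u v : FPS) :
    plus l (subst2 F u v) = subst2 F (plus l u) (plus l v) := by
  funext j k
  simp only [subst2, ← plus_fpow hl0, ← plus_fmul hl0]
  simp only [plus, subst2, Finset.mul_sum, mul_left_comm]

lemma d1_plus (hl0 : l ≠ 0) (f : FPS) : d1 (plus l f) = l • plus l (d1 f) := by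
  funext j k
  simp only [d1, plus, Pi.smul_apply, smul_eq_mul]
  rw [show ((j + 1 : ℕ) : ℤ) - k = (j : ℤ) - k + 1 by push_cast; ring, zpow_add_one₀ hl0]
  ring

lemma d1_minus (hl0 : l ≠ 0) (f : FPS) : d1 (minus l f) = l⁻¹ • minus l (d1 f) := by
  rw [minus_eq_plus_inv, minus_eq_plus_inv, d1_plus (inv_ne_zero hl0)]

end Twist

lemma swapI_add (f g : FPS) : swapI (f + g) = swapI f + swapI g := rfl

lemma swapI_plus (l : ℂ) (f : FPS) : swapI (plus l f) = minus l (swapI f) := rfl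

lemma swapI_minus (l : ℂ) (f : FPS) : swapI (minus l f) = plus l (swapI f) := rfl

lemma swapI_d1 (f : FPS) : swapI (d1 f) = d2 (swapI f) := rfl

lemma swapI_d2 (f : FPS) : swapI (d2 f) = d1 (swapI f) := rfl

lemma swapI_fmul (f g : FPS) : swapI (fmul f g) = fmul (swapI f) (swapI g) := by
  funext j k
  simp only [swapI, fmul]
  exact Finset.sum_comm

lemma swapI_oneF : swapI oneF = oneF := by
  funext j k
  simp only [swapI, oneF, and_comm]

lemma swapI_fpow (u : FPS) (m : ℕ) : swapI (fpow u m) = fpow (swapI u) m := by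
  induction m with
  | zero => exact swapI_oneF
  | succ n ih => rw [fpow, fpow, swapI_fmul, ih]

lemma swapI_substOne (q : OPS) (u : FPS) : swapI (substOne q u) = substOne q (swapI u) := by
  funext j k
  simp only [swapI, substOne, Nat.add_comm k j, ← swapI_fpow]

lemma swapI_subst2 (F u v : FPS) :
    swapI (subst2 F u v) = subst2 (swapI F) (swapI v) (swapI u) := by
  funext j k
  simp only [swapI, subst2, Nat.add_comm k j]
  rw [Finset.sum_comm]
  simp only [← swapI_fpow, ← swapI_fmul, fmul_comm (fpow v _)]
  rfl

lemma zpow_ne_one_of_ne_zero {l : ℂ} (hru : ∀ n : ℕ, 0 < n → l ^ n ≠ 1) {z : ℤ} (hz : z ≠ 0) :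
    l ^ z ≠ 1 := by
  obtain ⟨n, rfl | rfl⟩ := Int.eq_nat_or_neg z
  · rw [zpow_natCast]
    exact hru n (by omega)
  · rw [zpow_neg, zpow_natCast, inv_ne_one]
    exact hru n (by omega)

section Homological

variable {l : ℂ} (hl0 : l ≠ 0) (hru : ∀ n : ℕ, 0 < n → l ^ n ≠ 1)
include hl0 hru

lemma nabPlus_Eplus (g : FPS) : nabPlus l (Eplus l g) = g - Pip g := by
  funext j k
  by_cases hk : k = j + 1
  · simp [nabPlus, plus, Eplus, Pip, hk]
  · have hd : 1 - l ^ ((j : ℤ) - k + 1) ≠ 0 :=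
      sub_ne_zero.2 (zpow_ne_one_of_ne_zero hru (by omega)).symm
    simp only [nabPlus, plus, Eplus, Pip, hk, if_false, Pi.sub_apply, Pi.smul_apply,
      smul_eq_mul, sub_zero]
    rw [zpow_add_one₀ hl0] at hd ⊢
    field_simp

lemma nab_Emin (g : FPS) : nab l (Emin l g) = g - Pim g := by
  funext j k
  by_cases hj : j = k + 1
  · simp [nab, minus, Emin, Pim, hj]
  · have hd : l ^ ((k : ℤ) - j) - l⁻¹ ≠ 0 := by
      rw [sub_ne_zero]
      intro h
      apply zpow_ne_one_of_ne_zero hru (z := k - j + 1) (by omega)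
      rw [zpow_add_one₀ hl0, h, inv_mul_cancel₀ hl0]
    simp only [nab, minus, Emin, Pim, hj, if_false, Pi.sub_apply, Pi.smul_apply,
      smul_eq_mul, sub_zero]
    rw [← sub_mul, mul_div_cancel₀ _ hd]

end Homological

lemma Pip_add (f g : FPS) : Pip (f + g) = Pip f + Pip g := by
  funext j k
  by_cases hk : k = j + 1 <;> simp [Pip, hk]

lemma Pip_sub_self (f : FPS) : Pip (f - Pip f) = 0 := by
  funext j k
  by_cases hk : k = j + 1 <;> simp [Pip, hk]

lemma Pim_sub_self (f : FPS) : Pim (f - Pim f) = 0 := by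
  funext j k
  by_cases hj : j = k + 1 <;> simp [Pim, hj]

lemma Pip_inv_smul_minus {l : ℂ} (hl0 : l ≠ 0) (f : FPS) : Pip (l⁻¹ • minus l f) = Pip f := by
  funext j k
  by_cases hk : k = j + 1
  · simp [Pip, minus, hk, hl0]
  · simp [Pip, hk]

lemma nabPlus_neg (l : ℂ) (f : FPS) : nabPlus l (-f) = -nabPlus l f := by
  funext j k
  simp only [nabPlus, plus, Pi.sub_apply, Pi.neg_apply, Pi.smul_apply, smul_eq_mul]
  ring

lemma nabPlus_sub (l : ℂ) (f g : FPS) : nabPlus l (f - g) = nabPlus l f - nabPlus l g := by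
  funext j k
  simp only [nabPlus, plus, Pi.sub_apply, Pi.smul_apply, smul_eq_mul]
  ring

lemma Sq_one_one (q : OPS) : Sq q 1 1 = q 0 / 4 + q 2 / 2 := by
  simp only [Sq, fmul, substOne, Finset.sum_range_succ, Finset.sum_range_zero]
  norm_num [fpow, fmul, oneF, halfSum, halfDiff, cosSeries, Finset.sum_range_succ]
  ring

lemma swapI_halfSum : swapI halfSum = halfSum := by
  funext j k
  simp only [swapI, halfSum]
  split_ifs <;> first | rfl | omega

lemma swapI_halfDiff : swapI halfDiff = -halfDiff := by
  funext j k
  simp only [swapI, halfDiff, Pi.neg_apply]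
  split_ifs <;> first | omega | norm_num

lemma fpow_smul (c : ℂ) (u : FPS) (m : ℕ) : fpow (c • u) m = c ^ m • fpow u m :=
  toPowerSeries.injective <| by
    simp only [toPowerSeries_fpow, toPowerSeries_smul, mul_pow, map_pow]

lemma fpow_neg (u : FPS) (m : ℕ) : fpow (-u) m = (-1 : ℂ) ^ m • fpow u m := by
  rw [← fpow_smul, neg_one_smul]

lemma substOne_cosSeries_neg (u : FPS) : substOne cosSeries (-u) = substOne cosSeries u := by
  funext j k
  refine Finset.sum_congr rfl fun m _ => ?_
  rcases Nat.even_or_odd m with hm | hm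
  · rw [fpow_neg, hm.neg_one_pow, one_smul]
  · simp [cosSeries, Nat.odd_iff.1 hm]

lemma swapI_Sq (q : OPS) : swapI (Sq q) = Sq q := by
  rw [Sq, swapI_fmul, swapI_substOne, swapI_substOne, swapI_halfSum, swapI_halfDiff,
    substOne_cosSeries_neg]

lemma d1_add (f g : FPS) : d1 (f + g) = d1 f + d1 g := by
  funext j k
  simp only [d1, Pi.add_apply, mul_add]

lemma d1_d2 (f : FPS) : d1 (d2 f) = d2 (d1 f) := by
  funext j k
  simp only [d1, d2]
  ring

section Err

variable {l : ℂ} {q : OPS} {φ : FPS}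

lemma dErr_add (f g : FPS) : dErr l q φ (f + g) = dErr l q φ f + dErr l q φ g := by
  simp only [dErr, minus_eq_plus_inv, plus_add, fmul_add]
  abel

lemma dErr_smul (c : ℂ) (f : FPS) : dErr l q φ (c • f) = c • dErr l q φ f := by
  simp only [dErr, minus_eq_plus_inv, plus_smul, fmul_smul, smul_add]

lemma swapI_Err (hsym : swapI φ = φ) : swapI (Err l q φ) = Err l q φ := by
  simp only [Err, swapI_add, swapI_subst2, swapI_d1, swapI_d2, swapI_Sq, swapI_minus,
    swapI_plus, hsym]
  exact add_comm _ _

lemma swapI_dErr (hsym : swapI φ = φ) (f : FPS) :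
    swapI (dErr l q φ f) = dErr l q φ (swapI f) := by
  simp only [dErr, swapI_add, swapI_fmul, swapI_subst2, swapI_d1, swapI_d2, swapI_Sq,
    swapI_minus, swapI_plus, hsym, d1_d2]
  abel

lemma d1_Err (hl0 : l ≠ 0) (hφ : IsO 1 φ) :
    d1 (Err l q φ) =
      l⁻¹ • fmul (subst2 (d1 (d2 (Sq q))) (minus l φ) φ) (minus l (d1 φ))
        + fmul (subst2 (d2 (d2 (Sq q))) (minus l φ) φ) (d1 φ)
        + fmul (subst2 (d1 (d1 (Sq q))) φ (plus l φ)) (d1 φ)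
        + l • fmul (subst2 (d1 (d2 (Sq q))) φ (plus l φ)) (plus l (d1 φ)) := by
  rw [Err, d1_add, d1_subst2 (hφ.minus l) hφ, d1_subst2 hφ (hφ.plus l), d1_minus hl0,
    d1_plus hl0, fmul_smul, fmul_smul, d1_d2, ← add_assoc]

lemma fmul_d1_dErr_fmul_d1 (hl0 : l ≠ 0) (hφ : IsO 1 φ) (ξ : FPS) :
    fmul (d1 φ) (dErr l q φ (fmul (d1 φ) ξ)) =
      nabPlus l (fmul (hFun l q φ) (nab l ξ)) + fmul (fmul (d1 φ) ξ) (d1 (Err l q φ)) := by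
  have hC : PowerSeries.C (PowerSeries.C l) * PowerSeries.C (PowerSeries.C l⁻¹) = 1 := by
    rw [← map_mul, ← map_mul, mul_inv_cancel₀ hl0, map_one, map_one]
  rw [d1_Err hl0 hφ]
  apply toPowerSeries.injective
  simp only [dErr, hFun, nabPlus, nab, minus_eq_plus_inv, plus_fmul hl0,
    plus_fmul (inv_ne_zero hl0), plus_sub, plus_smul, plus_subst2 hl0, plus_plus,
    mul_inv_cancel₀ hl0, plus_one, map_add, map_sub, toPowerSeries_smul, toPowerSeries_fmul]
  linear_combination (-(toPowerSeries (subst2 (d1 (d2 (Sq q))) φ (plus l φ))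
      * toPowerSeries (plus l (d1 φ)) * toPowerSeries (d1 φ) * toPowerSeries (plus l ξ))) * hC

lemma Pip_d1_subst2_Sq (hl0 : l ≠ 0) (hφ : IsO 1 φ) :
    Pip (d1 (subst2 (Sq q) (minus l φ) φ)) = Pip (fmul (Err l q φ) (d1 φ)) := by
  have hswap : fmul (subst2 (d1 (Sq q)) (minus l φ) φ) (minus l (d1 φ)) =
      minus l (fmul (subst2 (d1 (Sq q)) φ (plus l φ)) (d1 φ)) := by
    simp only [minus_eq_plus_inv, plus_fmul (inv_ne_zero hl0), plus_subst2 (inv_ne_zero hl0),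
      plus_plus, inv_mul_cancel₀ hl0, plus_one]
  rw [d1_subst2 (hφ.minus l) hφ, d1_minus hl0, fmul_smul, hswap, Pip_add,
    Pip_inv_smul_minus hl0, Err, add_fmul, Pip_add, add_comm]

lemma nabPlus_psiFun (hl0 : l ≠ 0) (hru : ∀ n : ℕ, 0 < n → l ^ n ≠ 1) :
    nabPlus l (psiFun l q φ) = Pip (fmul (Err l q φ) (d1 φ)) - fmul (Err l q φ) (d1 φ) := by
  rw [psiFun, nabPlus_neg, nabPlus_Eplus hl0 hru, Pip_sub_self, sub_zero, neg_sub]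

lemma fmul_d1_R4Fun (hP0 : d1 φ 0 0 ≠ 0) :
    fmul (d1 φ) (R4Fun l q φ) = fmul (d1 (Err l q φ)) (wFun l q φ) + R3Fun l q φ := by
  rw [R4Fun, fmul_add, ← fmul_assoc, fmul_comm (d1 φ), fmul_assoc, fmul_fdiv hP0,
    fmul_fdiv hP0]

lemma Err_add_dErr_wFun (hl0 : l ≠ 0) (hru : ∀ n : ℕ, 0 < n → l ^ n ≠ 1) (hφ : IsO 1 φ)
    (hP0 : d1 φ 0 0 ≠ 0) (hh0 : hFun l q φ 0 0 ≠ 0) :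
    Err l q φ + dErr l q φ (wFun l q φ) = R4Fun l q φ := by
  set ψ := psiFun l q φ
  set h := hFun l q φ
  set ρ := fdiv ψ h
  have hnab : fmul h (nab l (Emin l (ρ - Pim ρ))) = ψ - fmul h (Pim ρ) := by
    rw [nab_Emin hl0 hru, Pim_sub_self, sub_zero, fmul_sub, fmul_fdiv hh0]
  apply fmul_left_cancel hP0
  calc fmul (d1 φ) (Err l q φ + dErr l q φ (wFun l q φ))
      = fmul (d1 φ) (Err l q φ) + nabPlus l (fmul h (nab l (Emin l (ρ - Pim ρ))))
          + fmul (wFun l q φ) (d1 (Err l q φ)) := by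
        rw [fmul_add, wFun, fmul_d1_dErr_fmul_d1 hl0 hφ, add_assoc]
    _ = fmul (d1 φ) (Err l q φ) + nabPlus l ψ - nabPlus l (fmul h (Pim ρ))
          + fmul (wFun l q φ) (d1 (Err l q φ)) := by
        rw [hnab, nabPlus_sub, add_sub_assoc]
    _ = fmul (d1 φ) (R4Fun l q φ) := by
        rw [nabPlus_psiFun hl0 hru, fmul_d1_R4Fun hP0, R3Fun, Pip_d1_subst2_Sq hl0 hφ,
          fmul_comm (d1 φ), fmul_comm (wFun l q φ)]
        abel

lemma subst2_zero_zero (G u v : FPS) : subst2 G u v 0 0 = G 0 0 := by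
  simp [subst2, fmul, fpow, oneF]

lemma hFun_zero_zero (l : ℂ) (q : OPS) (φ : FPS) :
    hFun l q φ 0 0 = Sq q 1 1 * d1 φ 0 0 ^ 2 := by
  simp only [hFun, fmul, zero_add, Finset.range_one, Finset.sum_singleton, subst2_zero_zero,
    minus, sub_self, zpow_zero, one_mul, d1, d2, Nat.cast_one]
  ring

end Err

theorem symmetrized_linearized_solution_general
    (l : ℂ) (hl : ‖l‖ = 1) (hru : ∀ n : ℕ, 0 < n → l ^ n ≠ 1)
    (qs : OPS) (hq0 : qs 0 = 1) (hs0 : (1 + 2 * qs 2) / 4 ≠ (0 : ℂ))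
    (φ : FPS) (hφ : normalized φ) (hsym : swapI φ = φ) :
    Err l qs φ
        + dErr l qs φ ((2 : ℂ)⁻¹ • (wFun l qs φ + swapI (wFun l qs φ))) =
      (2 : ℂ)⁻¹ • (R4Fun l qs φ + swapI (R4Fun l qs φ)) := by
  have hl0 : l ≠ 0 := by
    rintro rfl
    simp at hl
  have hP0 : d1 φ 0 0 = 1 := by simp [d1, hφ.2.1]
  have hh0 : hFun l qs φ 0 0 ≠ 0 := by
    rw [hFun_zero_zero, hP0, Sq_one_one, hq0]
    contrapose! hs0
    linear_combination hs0
  have key := Err_add_dErr_wFun hl0 hru (isO_one_iff.2 hφ.1) (hP0 ▸ one_ne_zero) hh0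
  have key_swap : swapI (R4Fun l qs φ) = Err l qs φ + dErr l qs φ (swapI (wFun l qs φ)) := by
    rw [← key, swapI_add, swapI_Err hsym, swapI_dErr hsym]
  rw [dErr_smul, dErr_add, key_swap, ← key]
  module

/-- With `Δφ = (w + w∘I)/2`, `R₃`, `R₄` as in the construction:
`ℰ(q*,φ) + ∂_φℰ(q*,φ)(Δφ) = (R₄ + R₄∘I)/2`. -/
theorem symmetrized_linearized_solution
    (l : ℂ) (hl : ‖l‖ = 1) (hru : ∀ n : ℕ, 0 < n → l ^ n ≠ 1)
    (hl2 : l ^ 2 ≠ 1)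
    (qs : OPS) (hq0 : qs 0 = 1) (hs0 : (1 + 2 * qs 2) / 4 ≠ (0 : ℂ))
    (φ : FPS) (hφ : normalized φ) (hsym : swapI φ = φ) :
    Err l qs φ
        + dErr l qs φ ((2 : ℂ)⁻¹ • (wFun l qs φ + swapI (wFun l qs φ))) =
      (2 : ℂ)⁻¹ • (R4Fun l qs φ + swapI (R4Fun l qs φ)) :=
  symmetrized_linearized_solution_general l hl hru qs hq0 hs0 φ hφ hsym

end Treschev

end
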